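/- arXiv:1310.4917 — 4 statements merged into one kernel-verified Lean document; each statement's English description precedes it below -/
import Mathlib

section
/- If the weak pullback omega-limit Ω_w(A,t) is strongly compact and uniformly strongly pullback attracts A, then Ω_s(A,t) = Ω_w(A,t). -/
/-!
Strong convergence implies weak convergence, so `Ω_s(A,t) ⊆ Ω_w(A,t)`. Conversely, a point
`x ∈ Ω_w(A,t)` is a weak limit of points of `P(t,r_n)A` with `r_n → -∞`; by the uniform attraction
these are strongly asymptotic to points of the strongly compact set `Ω_w(A,t)`, so a subsequence
converges strongly to some `y`. Then it also converges weakly to `y`, and uniqueness of weak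
limits gives `x = y ∈ Ω_s(A,t)`.
-/

open Filter Topology MeasureTheory

variable {X : Type*}

/-- Convergence of a sequence with respect to a distance function `d`. -/
def Conv (d : X → X → ℝ) (u : ℕ → X) (x : X) : Prop :=
  ∀ ε > 0, ∃ N, ∀ n ≥ N, d (u n) x < ε

/-- The `d`-distance between two paired sequences tends to zero. -/
def DistTendsZero (d : X → X → ℝ) (u v : ℕ → X) : Prop :=
  ∀ ε > 0, ∃ N, ∀ n ≥ N, d (u n) (v n) < ε

/-- Sequential closure of a set with respect to the distance `d`. -/
def SeqClosure (d : X → X → ℝ) (A : Set X) : Set X :=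
  {x | ∃ u : ℕ → X, (∀ n, u n ∈ A) ∧ Conv d u x}

/-- Sequential closedness with respect to the distance `d`. -/
def SeqClosed (d : X → X → ℝ) (A : Set X) : Prop :=
  SeqClosure d A ⊆ A

/-- Sequential compactness of a set with respect to the distance `d`. -/
def SeqCompactIn (d : X → X → ℝ) (A : Set X) : Prop :=
  ∀ u : ℕ → X, (∀ n, u n ∈ A) →
    ∃ x ∈ A, ∃ φ : ℕ → ℕ, StrictMono φ ∧ Conv d (u ∘ φ) x

/-- `d` is a metric on `X`. -/
def IsMetric (d : X → X → ℝ) : Prop :=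
  (∀ x y, 0 ≤ d x y) ∧ (∀ x y, d x y = 0 ↔ x = y) ∧ (∀ x y, d x y = d y x) ∧
  (∀ x y z, d x z ≤ d x y + d y z)

/-- Uniform convergence of trajectories on each compact subinterval `[s,T]`,
i.e. convergence in `C([s,∞);X)` with distance `d` on `X`. -/
def ConvTraj (d : X → X → ℝ) (s : ℝ) (u : ℕ → ℝ → X) (v : ℝ → X) : Prop :=
  ∀ T : ℝ, ∀ ε > 0, ∃ N, ∀ n ≥ N, ∀ r ∈ Set.Icc s T, d (u n r) (v r) < ε

/-- A generalized evolutionary system: to each interval `[s,∞)` it assigns a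
nonempty set of trajectories (encoded as functions `ℝ → X`, only the values on
`[s,∞)` being relevant), closed under restriction to later starting times. -/
structure GES (X : Type*) where
  traj : ℝ → Set (ℝ → X)
  nonempty : ∀ s : ℝ, (traj s).Nonempty
  mono : ∀ ⦃s s' : ℝ⦄, s ≤ s' → traj s ⊆ traj s'

namespace GES

variable (E : GES X)

/-- Complete trajectories: those whose restriction to every `[T,∞)` is a trajectory. -/
def complete : Set (ℝ → X) := {u | ∀ T : ℝ, u ∈ E.traj T}

/-- `P(t,s)A = {u(t) : u ∈ E([s,∞)), u(s) ∈ A}`. -/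
def P (t s : ℝ) (A : Set X) : Set X :=
  {x | ∃ u ∈ E.traj s, u s ∈ A ∧ u t = x}

/-- `P̃(t,s)A = {u(t) : u ∈ E((-∞,∞)), u(s) ∈ A}`. -/
def Ptil (t s : ℝ) (A : Set X) : Set X :=
  {x | ∃ u ∈ E.complete, u s ∈ A ∧ u t = x}

/-- The pullback omega-limit `Ω_d(A,t) = ⋂_{s≤t} cl_d(⋃_{r≤s} P(t,r)A)`. -/
def Omega (d : X → X → ℝ) (A : Set X) (t : ℝ) : Set X :=
  ⋂ s ∈ Set.Iic t, SeqClosure d (⋃ r ∈ Set.Iic s, E.P t r A)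

/-- The family `Afam` pullback attracts the set `B` in the metric `d`. -/
def PullbackAttracts (d : X → X → ℝ) (Afam : ℝ → Set X) (B : Set X) : Prop :=
  ∀ t : ℝ, ∀ ε > 0, ∃ s0 ≤ t, ∀ s ≤ s0, ∀ x ∈ E.P t s B, ∃ a ∈ Afam t, d x a < ε

/-- The `d`-pullback attractor: a family of `d`-closed, `d`-pullback attracting
sets which is minimal with respect to these properties. -/
def IsPullbackAttractor (d : X → X → ℝ) (Afam : ℝ → Set X) : Prop :=
  (∀ t, SeqClosed d (Afam t)) ∧ E.PullbackAttracts d Afam Set.univ ∧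
  ∀ B : ℝ → Set X, (∀ t, SeqClosed d (B t)) → E.PullbackAttracts d B Set.univ →
    ∀ t, Afam t ⊆ B t

/-- Pullback asymptotic compactness with respect to `d`. -/
def PullbackAsympCompact (d : X → X → ℝ) : Prop :=
  ∀ t : ℝ, ∀ s : ℕ → ℝ, (∀ n, s n ≤ t) → Tendsto s atTop atBot →
    ∀ x : ℕ → X, (∀ n, x n ∈ E.P t (s n) Set.univ) →
      ∃ y : X, ∃ φ : ℕ → ℕ, StrictMono φ ∧ Conv d (x ∘ φ) y

/-- Pullback semi-invariance. -/
def PBSemiInv (B : ℝ → Set X) : Prop :=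
  ∀ ⦃s t : ℝ⦄, s ≤ t → E.Ptil t s (B s) ⊆ B t

/-- Pullback invariance. -/
def PBInv (B : ℝ → Set X) : Prop :=
  ∀ ⦃s t : ℝ⦄, s ≤ t → E.Ptil t s (B s) = B t

/-- Pullback quasi-invariance. -/
def PBQuasiInv (B : ℝ → Set X) : Prop :=
  ∀ t : ℝ, ∀ b ∈ B t, ∃ u ∈ E.complete, u t = b ∧ ∀ s ≤ t, u s ∈ B s

/-- Condition A1: `E([s,∞))` is compact in `C([s,∞);X_w)` for each `s`. -/
def A1 (d : X → X → ℝ) : Prop :=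
  ∀ s : ℝ, ∀ u : ℕ → ℝ → X, (∀ n, u n ∈ E.traj s) →
    ∃ v ∈ E.traj s, ∃ φ : ℕ → ℕ, StrictMono φ ∧ ConvTraj d s (fun n => u (φ n)) v

end GES

section Convergence

variable {d : X → X → ℝ}

theorem DistTendsZero.of_lt_inv_succ {u v : ℕ → X} (h : ∀ n : ℕ, d (u n) (v n) < 1 / (n + 1)) :
    DistTendsZero d u v := by
  intro ε hε
  obtain ⟨N, hN⟩ := exists_nat_one_div_lt hε
  refine ⟨N, fun n hn => (h n).trans_le (le_trans ?_ hN.le)⟩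
  gcongr

theorem DistTendsZero.comp_strictMono {u v : ℕ → X} (h : DistTendsZero d u v) {φ : ℕ → ℕ}
    (hφ : StrictMono φ) : DistTendsZero d (u ∘ φ) (v ∘ φ) := by
  intro ε hε
  obtain ⟨N, hN⟩ := h ε hε
  exact ⟨N, fun n hn => hN (φ n) (hn.trans hφ.le_apply)⟩

theorem Conv.comp_strictMono {u : ℕ → X} {x : X} (h : Conv d u x) {φ : ℕ → ℕ}
    (hφ : StrictMono φ) : Conv d (u ∘ φ) x :=
  DistTendsZero.comp_strictMono h hφ

theorem Conv.of_distTendsZero (hd : IsMetric d) {u v : ℕ → X} {x : X}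
    (huv : DistTendsZero d u v) (hv : Conv d v x) : Conv d u x := by
  intro ε hε
  obtain ⟨N₁, hN₁⟩ := huv (ε / 2) (by linarith)
  obtain ⟨N₂, hN₂⟩ := hv (ε / 2) (by linarith)
  refine ⟨max N₁ N₂, fun n hn => ?_⟩
  have h₁ := hN₁ n (le_of_max_le_left hn)
  have h₂ := hN₂ n (le_of_max_le_right hn)
  linarith [hd.2.2.2 (u n) (v n) x]

theorem Conv.unique (hd : IsMetric d) {u : ℕ → X} {x y : X} (hx : Conv d u x)
    (hy : Conv d u y) : x = y := by
  obtain ⟨hnonneg, hzero, hsymm, htri⟩ := hd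
  have hsmall : ∀ ε > 0, d x y < ε := by
    intro ε hε
    obtain ⟨N₁, hN₁⟩ := hx (ε / 2) (by linarith)
    obtain ⟨N₂, hN₂⟩ := hy (ε / 2) (by linarith)
    have h₁ := hN₁ (max N₁ N₂) (le_max_left _ _)
    have h₂ := hN₂ (max N₁ N₂) (le_max_right _ _)
    linarith [htri x (u (max N₁ N₂)) y, hsymm x (u (max N₁ N₂))]
  refine (hzero x y).1 (le_antisymm ?_ (hnonneg x y))
  exact le_of_forall_pos_lt_add fun ε hε => by simpa using hsmall ε hε

theorem exists_dist_lt_of_mem_seqClosure {B : Set X} {x : X} (hx : x ∈ SeqClosure d B) :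
    ∀ ε > 0, ∃ b ∈ B, d b x < ε := by
  obtain ⟨u, hu, hconv⟩ := hx
  intro ε hε
  obtain ⟨N, hN⟩ := hconv ε hε
  exact ⟨u N, hu N, hN N le_rfl⟩

end Convergence

section StrongWeak

variable {ds dw : X → X → ℝ} (H : ∀ u v : ℕ → X, DistTendsZero ds u v → DistTendsZero dw u v)
include H

theorem Conv.weak {u : ℕ → X} {x : X} (h : Conv ds u x) : Conv dw u x :=
  H u _ h

theorem seqClosure_strong_subset_weak (B : Set X) : SeqClosure ds B ⊆ SeqClosure dw B :=
  fun _ ⟨u, hu, hconv⟩ => ⟨u, hu, hconv.weak H⟩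

theorem Conv.exists_strictMono_conv_strong (hds : IsMetric ds) (hdw : IsMetric dw) {K : Set X}
    (hK : SeqCompactIn ds K) {u a : ℕ → X} {x : X} (ha : ∀ n, a n ∈ K)
    (hua : DistTendsZero ds u a) (hux : Conv dw u x) :
    ∃ φ : ℕ → ℕ, StrictMono φ ∧ Conv ds (u ∘ φ) x := by
  obtain ⟨y, -, φ, hφ, hay⟩ := hK a ha
  have huy : Conv ds (u ∘ φ) y := Conv.of_distTendsZero hds (hua.comp_strictMono hφ) hay
  obtain rfl : x = y := (hux.comp_strictMono hφ).unique hdw (huy.weak H)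
  exact ⟨φ, hφ, huy⟩

theorem mem_seqClosure_strong_of_approx (hds : IsMetric ds) (hdw : IsMetric dw) {K : Set X}
    (hK : SeqCompactIn ds K) {B : Set X} {x : X}
    (h : ∀ ε > 0, ∃ b ∈ B, ∃ a ∈ K, dw b x < ε ∧ ds b a < ε) : x ∈ SeqClosure ds B := by
  choose u hu a ha hux hua using fun n : ℕ => h (1 / (n + 1)) (by positivity)
  obtain ⟨φ, hφ, hconv⟩ := Conv.exists_strictMono_conv_strong H hds hdw hK ha
    (DistTendsZero.of_lt_inv_succ hua) (DistTendsZero.of_lt_inv_succ hux)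
  exact ⟨u ∘ φ, fun n => hu (φ n), hconv⟩

end StrongWeak

namespace GES

variable (E : GES X)

theorem mem_omega_iff {d : X → X → ℝ} {A : Set X} {t : ℝ} {x : X} :
    x ∈ E.Omega d A t ↔ ∀ s ≤ t, x ∈ SeqClosure d (⋃ r ∈ Set.Iic s, E.P t r A) := by
  simp only [Omega, Set.mem_iInter₂, Set.mem_Iic]

theorem omega_strong_subset_weak {ds dw : X → X → ℝ}
    (H : ∀ u v : ℕ → X, DistTendsZero ds u v → DistTendsZero dw u v) (A : Set X) (t : ℝ) :
    E.Omega ds A t ⊆ E.Omega dw A t := fun _ hx =>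
  E.mem_omega_iff.2 fun s hs => seqClosure_strong_subset_weak H _ (E.mem_omega_iff.1 hx s hs)

theorem omega_weak_subset_strong {ds dw : X → X → ℝ} (hds : IsMetric ds) (hdw : IsMetric dw)
    (H : ∀ u v : ℕ → X, DistTendsZero ds u v → DistTendsZero dw u v) {A K : Set X} {t : ℝ}
    (hK : SeqCompactIn ds K)
    (hattr : ∀ ε > 0, ∃ s0 ≤ t, ∀ s ≤ s0, ∀ x ∈ E.P t s A, ∃ a ∈ K, ds x a < ε) :
    E.Omega dw A t ⊆ E.Omega ds A t := by
  intro x hx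
  refine E.mem_omega_iff.2 fun s hs => mem_seqClosure_strong_of_approx H hds hdw hK ?_
  intro ε hε
  obtain ⟨s0, -, hs0⟩ := hattr ε hε
  have hx' := E.mem_omega_iff.1 hx (min s s0) ((min_le_left _ _).trans hs)
  obtain ⟨b, hb, hbx⟩ := exists_dist_lt_of_mem_seqClosure hx' ε hε
  simp only [Set.mem_iUnion₂, Set.mem_Iic] at hb
  obtain ⟨r, hr, hbr⟩ := hb
  obtain ⟨a, ha, hba⟩ := hs0 r (hr.trans (min_le_right _ _)) b hbr
  exact ⟨b, Set.mem_biUnion (Set.mem_Iic.2 (hr.trans (min_le_left _ _))) hbr, a, ha, hbx, hba⟩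

end GES

theorem stmt2_general {X : Type*} (E : GES X) (ds dw : X → X → ℝ)
    (hds : IsMetric ds) (hdw : IsMetric dw)
    (H : ∀ u v : ℕ → X, DistTendsZero ds u v → DistTendsZero dw u v)
    (A : Set X) (t : ℝ)
    (hcomp : SeqCompactIn ds (E.Omega dw A t))
    (hattr : ∀ ε > 0, ∃ s0 ≤ t, ∀ s ≤ s0, ∀ x ∈ E.P t s A,
      ∃ a ∈ E.Omega dw A t, ds x a < ε) :
    E.Omega ds A t = E.Omega dw A t :=
  (E.omega_strong_subset_weak H A t).antisymm (E.omega_weak_subset_strong hds hdw H hcomp hattr)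

/-- if `Ω_w(A,t)` is strongly compact and uniformly strongly
pullback attracts `A`, then `Ω_s(A,t) = Ω_w(A,t)`. -/
theorem stmt2 {X : Type*} (E : GES X) (ds dw : X → X → ℝ)
    (hds : IsMetric ds) (hdw : IsMetric dw)
    (hcompact : SeqCompactIn dw (Set.univ : Set X))
    (H : ∀ u v : ℕ → X, DistTendsZero ds u v → DistTendsZero dw u v)
    (A : Set X) (t : ℝ)
    (hcomp : SeqCompactIn ds (E.Omega dw A t))
    (hattr : ∀ ε > 0, ∃ s0 ≤ t, ∀ s ≤ s0, ∀ x ∈ E.P t s A,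
      ∃ a ∈ E.Omega dw A t, ds x a < ε) :
    E.Omega ds A t = E.Omega dw A t :=
  stmt2_general E ds dw hds hdw H A t hcomp hattr
end

section
/- If the d_•-pullback attractor A_•(t) exists (i.e., a family of d_•-closed, d_•-pullback attracting sets minimal with respect to these properties), then A_•(t) = Ω_•(X,t) for every t; in particular the pullback attractor is unique. -/
open Filter Topology MeasureTheory

variable {X : Type*}

/-!
Every `d`-closed pullback attracting family contains `Ω_d(X,t)`: a point of `Ω_d(X,t)` is
`ε`-close to some `P(t,r)X` with `r` arbitrarily negative, which is in turn `ε`-close to the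
family. Conversely, for `s ≤ t` the family `τ ↦ cl_d(⋃_{r ≤ min s τ} P(τ,r)X)` is itself closed
and attracting, so by minimality the attractor at time `t` lies in `cl_d(⋃_{r≤s} P(t,r)X)` for
every `s ≤ t`, i.e. in `Ω_d(X,t)`.
-/

section SeqClosure

variable {d : X → X → ℝ}

theorem mem_seqClosure_iff (hsymm : ∀ x y, d x y = d y x) {A : Set X} {x : X} :
    x ∈ SeqClosure d A ↔ ∀ ε > 0, ∃ a ∈ A, d x a < ε := by
  constructor
  · rintro ⟨u, hu, hconv⟩ ε hε
    obtain ⟨N, hN⟩ := hconv ε hε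
    exact ⟨u N, hu N, hsymm x (u N) ▸ hN N le_rfl⟩
  · intro h
    choose u hu hdu using fun n : ℕ => h (1 / (n + 1)) n.one_div_pos_of_nat
    refine ⟨u, hu, fun ε hε => ?_⟩
    obtain ⟨N, hN⟩ := exists_nat_one_div_lt hε
    refine ⟨N, fun n hn => ?_⟩
    calc d (u n) x = d x (u n) := hsymm _ _
      _ < 1 / (n + 1) := hdu n
      _ ≤ 1 / (N + 1) := Nat.one_div_le_one_div hn
      _ < ε := hN

theorem IsMetric.subset_seqClosure (hd : IsMetric d) (A : Set X) : A ⊆ SeqClosure d A :=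
  fun x hx => (mem_seqClosure_iff hd.2.2.1).2 fun _ hε => ⟨x, hx, ((hd.2.1 x x).2 rfl).symm ▸ hε⟩

theorem IsMetric.seqClosed_seqClosure (hd : IsMetric d) (A : Set X) :
    SeqClosed d (SeqClosure d A) := by
  intro x hx
  rw [mem_seqClosure_iff hd.2.2.1] at hx ⊢
  intro ε hε
  obtain ⟨a, ha, hxa⟩ := hx (ε / 2) (half_pos hε)
  obtain ⟨b, hb, hab⟩ := (mem_seqClosure_iff hd.2.2.1).1 ha (ε / 2) (half_pos hε)
  exact ⟨b, hb, by linarith [hd.2.2.2 x a b]⟩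

end SeqClosure

namespace GES

variable (E : GES X) {d : X → X → ℝ}

/-- `cl_d(⋃_{r≤s} P(t,r)X)`. -/
def tailClosure (d : X → X → ℝ) (t s : ℝ) : Set X :=
  SeqClosure d (⋃ r ∈ Set.Iic s, E.P t r Set.univ)

theorem omega_univ_eq_iInter_tailClosure (d : X → X → ℝ) (t : ℝ) :
    E.Omega d Set.univ t = ⋂ s ∈ Set.Iic t, E.tailClosure d t s :=
  rfl

theorem pullbackAttracts_tailClosure (hd : IsMetric d) (σ : ℝ → ℝ) (hσ : ∀ τ, σ τ ≤ τ) :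
    E.PullbackAttracts d (fun τ => E.tailClosure d τ (σ τ)) Set.univ := by
  intro τ ε hε
  refine ⟨σ τ, hσ τ, fun s hs x hx => ⟨x, ?_, ((hd.2.1 x x).2 rfl).symm ▸ hε⟩⟩
  exact hd.subset_seqClosure _ (Set.mem_biUnion hs hx)

theorem omega_subset_of_pullbackAttracts (hd : IsMetric d) {B : ℝ → Set X}
    (hclosed : ∀ t, SeqClosed d (B t)) (hattr : E.PullbackAttracts d B Set.univ) (t : ℝ) :
    E.Omega d Set.univ t ⊆ B t := by
  intro x hx
  refine hclosed t ((mem_seqClosure_iff hd.2.2.1).2 fun ε hε => ?_)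
  obtain ⟨s₀, hs₀, hattr⟩ := hattr t (ε / 2) (half_pos hε)
  rw [omega_univ_eq_iInter_tailClosure, Set.mem_iInter₂] at hx
  obtain ⟨y, hy, hxy⟩ := (mem_seqClosure_iff hd.2.2.1).1 (hx s₀ hs₀) (ε / 2) (half_pos hε)
  obtain ⟨r, hr, hyP⟩ := Set.mem_iUnion₂.1 hy
  obtain ⟨b, hb, hyb⟩ := hattr r hr y hyP
  exact ⟨b, hb, by linarith [hd.2.2.2 x y b]⟩

theorem IsPullbackAttractor.subset_omega {E : GES X} (hd : IsMetric d) {A : ℝ → Set X}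
    (hA : E.IsPullbackAttractor d A) (t : ℝ) : A t ⊆ E.Omega d Set.univ t := by
  rw [omega_univ_eq_iInter_tailClosure]
  refine Set.subset_iInter₂ fun s (hs : s ≤ t) => ?_
  have := hA.2.2 (fun τ => E.tailClosure d τ (min s τ)) (fun τ => hd.seqClosed_seqClosure _)
    (E.pullbackAttracts_tailClosure hd _ fun τ => min_le_right s τ) t
  rwa [min_eq_left hs] at this

theorem IsPullbackAttractor.eq_omega {E : GES X} (hd : IsMetric d) {A : ℝ → Set X}
    (hA : E.IsPullbackAttractor d A) (t : ℝ) : A t = E.Omega d Set.univ t :=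
  (hA.subset_omega hd t).antisymm (E.omega_subset_of_pullbackAttracts hd hA.1 hA.2.1 t)

end GES

/-- if the `d`-pullback attractor exists then it equals
`Ω_d(X,t)`; in particular the pullback attractor is unique. -/
theorem stmt4 {X : Type*} (E : GES X) (d : X → X → ℝ) (hd : IsMetric d)
    (Afam : ℝ → Set X) (h : E.IsPullbackAttractor d Afam) :
    (∀ t : ℝ, Afam t = E.Omega d Set.univ t) ∧
    (∀ Afam' : ℝ → Set X, E.IsPullbackAttractor d Afam' → ∀ t : ℝ, Afam' t = Afam t) :=
  ⟨h.eq_omega hd, fun _ h' t => (h'.eq_omega hd t).trans (h.eq_omega hd t).symm⟩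
end

section
/- Let A ⊆ X be such that for each t ∈ ℝ and r ≤ t there is a trajectory u ∈ E([r,∞)) with u(t) ∈ A. Then Ω_w(A,t) is a nonempty, weakly compact set, and Ω_w(A,t) weakly pullback attracts A. -/
open Filter Topology MeasureTheory

variable {X : Type*}

/-
Every sequence `x n ∈ P(t, s n) A` with `s n → -∞` has, by weak compactness of `X`, a subsequence
converging to a point which lies in each closure `cl_w(⋃_{r ≤ s} P(t,r)A)`, hence in `Ω_w(A,t)`.
Applied to any points of `P(t, r_n)A`, `r_n → -∞`, this gives a point of `Ω_w(A,t)`; applied to points staying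
`ε`-far from `Ω_w(A,t)` it gives a contradiction, which is the attraction. Compactness of
`Ω_w(A,t)` holds because it is an intersection of sequentially closed sets in a compact space.
-/

section SeqClosure

variable {X : Type*} {d : X → X → ℝ}

lemma Conv.comp_add_right {u : ℕ → X} {x : X} (h : Conv d u x) (N : ℕ) :
    Conv d (fun n => u (n + N)) x := fun ε hε =>
  let ⟨M, hM⟩ := h ε hε
  ⟨M, fun n hn => hM (n + N) (hn.trans (Nat.le_add_right n N))⟩

lemma Conv.mem_seqClosure {B : Set X} {u : ℕ → X} {x : X} (h : Conv d u x)
    (hB : ∀ᶠ n in atTop, u n ∈ B) : x ∈ SeqClosure d B := by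
  obtain ⟨N, hN⟩ := eventually_atTop.1 hB
  exact ⟨fun n => u (n + N), fun n => hN (n + N) (Nat.le_add_left N n), h.comp_add_right N⟩

lemma seqClosed_seqClosure (htri : ∀ x y z, d x z ≤ d x y + d y z) (B : Set X) :
    SeqClosed d (SeqClosure d B) := by
  rintro x ⟨y, hy, hconv⟩
  have hsel : ∀ n : ℕ, ∃ b ∈ B, d b (y n) < 1 / (n + 1) := by
    intro n
    obtain ⟨v, hv, hvc⟩ := hy n
    obtain ⟨N, hN⟩ := hvc (1 / (n + 1)) Nat.one_div_pos_of_nat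
    exact ⟨v N, hv N, hN N le_rfl⟩
  choose b hbB hbd using hsel
  refine ⟨b, hbB, fun ε hε => ?_⟩
  obtain ⟨N₁, hN₁⟩ := hconv (ε / 2) (half_pos hε)
  obtain ⟨N₂, hN₂⟩ := exists_nat_one_div_lt (half_pos hε)
  refine ⟨max N₁ N₂, fun n hn => ?_⟩
  have hn₂ : (N₂ : ℝ) ≤ n := Nat.cast_le.2 (le_of_max_le_right hn)
  have hbn : d (b n) (y n) < ε / 2 := calc
    d (b n) (y n) < 1 / (n + 1) := hbd n
    _ ≤ 1 / (N₂ + 1) := by gcongr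
    _ < ε / 2 := hN₂
  calc d (b n) x ≤ d (b n) (y n) + d (y n) x := htri _ _ _
    _ < ε / 2 + ε / 2 := add_lt_add hbn (hN₁ n (le_of_max_le_left hn))
    _ = ε := add_halves ε

lemma seqClosed_biInter {ι : Type*} {I : Set ι} {F : ι → Set X}
    (hF : ∀ i ∈ I, SeqClosed d (F i)) : SeqClosed d (⋂ i ∈ I, F i) := by
  rintro x ⟨u, hu, hconv⟩
  exact Set.mem_iInter₂.2 fun i hi =>
    hF i hi ⟨u, fun n => Set.mem_iInter₂.1 (hu n) i hi, hconv⟩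

lemma SeqCompactIn.of_seqClosed (hX : SeqCompactIn d (Set.univ : Set X)) {B : Set X}
    (hB : SeqClosed d B) : SeqCompactIn d B := by
  intro u hu
  obtain ⟨x, -, φ, hφ, hconv⟩ := hX u fun n => Set.mem_univ _
  exact ⟨x, hB ⟨u ∘ φ, fun n => hu (φ n), hconv⟩, φ, hφ, hconv⟩

end SeqClosure

lemma tendsto_min_neg_natCast_atBot (t : ℝ) :
    Tendsto (fun n : ℕ => min t (-(n : ℝ))) atTop atBot :=
  tendsto_atBot_mono (fun _ => min_le_right t _)
    (tendsto_neg_atTop_atBot.comp tendsto_natCast_atTop_atTop)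

namespace GES

variable {X : Type*} (E : GES X) {d : X → X → ℝ} (A : Set X) (t : ℝ)

lemma seqClosed_omega (htri : ∀ x y z, d x z ≤ d x y + d y z) :
    SeqClosed d (E.Omega d A t) :=
  seqClosed_biInter fun _ _ => seqClosed_seqClosure htri _

variable {A t}

lemma mem_omega_of_conv {s : ℕ → ℝ} (hs : Tendsto s atTop atBot) {x : ℕ → X}
    (hx : ∀ n, x n ∈ E.P t (s n) A) {y : X} (hconv : Conv d x y) : y ∈ E.Omega d A t :=
  Set.mem_iInter₂.2 fun s' _ =>
    hconv.mem_seqClosure <| (hs.eventually_le_atBot s').mono fun n hn =>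
      Set.mem_biUnion hn (hx n)

lemma exists_subseq_conv_mem_omega (hX : SeqCompactIn d (Set.univ : Set X))
    {s : ℕ → ℝ} (hs : Tendsto s atTop atBot) {x : ℕ → X} (hx : ∀ n, x n ∈ E.P t (s n) A) :
    ∃ y ∈ E.Omega d A t, ∃ φ : ℕ → ℕ, StrictMono φ ∧ Conv d (x ∘ φ) y := by
  obtain ⟨y, -, φ, hφ, hconv⟩ := hX x fun n => Set.mem_univ _
  exact ⟨y, E.mem_omega_of_conv (hs.comp hφ.tendsto_atTop) (fun n => hx (φ n)) hconv,
    φ, hφ, hconv⟩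

lemma omega_nonempty (hX : SeqCompactIn d (Set.univ : Set X))
    (hP : ∀ r ≤ t, (E.P t r A).Nonempty) : (E.Omega d A t).Nonempty := by
  choose x hx using fun n : ℕ => hP (min t (-(n : ℝ))) (min_le_left _ _)
  obtain ⟨y, hy, -⟩ := E.exists_subseq_conv_mem_omega hX (tendsto_min_neg_natCast_atBot t) hx
  exact ⟨y, hy⟩

lemma omega_attracts (hX : SeqCompactIn d (Set.univ : Set X)) :
    ∀ ε > 0, ∃ s0 ≤ t, ∀ s ≤ s0, ∀ x ∈ E.P t s A, ∃ a ∈ E.Omega d A t, d x a < ε := by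
  by_contra! hfar
  obtain ⟨ε, hε, hfar⟩ := hfar
  choose s hs x hxP hxa using fun n : ℕ => hfar (min t (-(n : ℝ))) (min_le_left _ _)
  have hs_atBot : Tendsto s atTop atBot :=
    tendsto_atBot_mono hs (tendsto_min_neg_natCast_atBot t)
  obtain ⟨y, hy, φ, -, hconv⟩ := E.exists_subseq_conv_mem_omega hX hs_atBot hxP
  obtain ⟨N, hN⟩ := hconv ε hε
  exact (hN N le_rfl).not_ge (hxa (φ N) y hy)

end GES

/-- if for each `t` and `r ≤ t` some trajectory on `[r,∞)` passes
through `A` at time `t`, then `Ω_w(A,t)` is nonempty, weakly compact, and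
weakly pullback attracts `A`. -/
theorem stmt6 {X : Type*} (E : GES X) (dw : X → X → ℝ) (hdw : IsMetric dw)
    (hcompact : SeqCompactIn dw (Set.univ : Set X))
    (A : Set X) (hA : ∀ t r : ℝ, r ≤ t → ∃ u ∈ E.traj r, u t ∈ A) (t : ℝ) :
    (E.Omega dw A t).Nonempty ∧ SeqCompactIn dw (E.Omega dw A t) ∧
    (∀ ε > 0, ∃ s0 ≤ t, ∀ s ≤ s0, ∀ x ∈ E.P t s A,
      ∃ a ∈ E.Omega dw A t, dw x a < ε) := by
  have hP : ∀ r ≤ t, (E.P t r A).Nonempty := fun r _ => by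
    obtain ⟨u, hu, huA⟩ := hA r r le_rfl
    exact ⟨u t, u, hu, huA, rfl⟩
  exact ⟨E.omega_nonempty hcompact hP,
    hcompact.of_seqClosed (E.seqClosed_omega A t hdw.2.2.2),
    E.omega_attracts hcompact⟩
end

section
/- Let E satisfy A2 (energy inequality) and A3 (strong convergence a.e.). Suppose u_n ∈ E([s,∞)) with u_n → u in C([s,t];X_w) for some u ∈ E([s,∞)), and u is strongly continuous at a point t* ∈ (s,t). Then u_n(t*) → u(t*) in the strong metric d_s. -/
open Filter Topology MeasureTheory

variable {X : Type*}

/-- Condition A2 (energy inequality) for a system on a normed phase space. -/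
def A2 {H : Type*} [NormedAddCommGroup H] (E : GES H) : Prop :=
  ∀ ε > (0 : ℝ), ∀ s : ℝ, ∃ δ > (0 : ℝ), ∀ u ∈ E.traj s, ∀ t > s,
    ∀ᵐ t0 ∂(volume : Measure ℝ), t0 ∈ Set.Ioo (t - δ) t → ‖u t‖ ≤ ‖u t0‖ + ε

/-- Condition A3 (strong convergence a.e.): weak convergence of trajectories in
`C([s,t];X_w)` implies strong (norm) convergence at almost every time. -/
def A3 {H : Type*} [NormedAddCommGroup H] (E : GES H) (dw : H → H → ℝ) : Prop :=
  ∀ s t : ℝ, s ≤ t → ∀ u ∈ E.traj s, ∀ un : ℕ → ℝ → H, (∀ n, un n ∈ E.traj s) →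
    (∀ ε > (0 : ℝ), ∃ N, ∀ n ≥ N, ∀ r ∈ Set.Icc s t, dw (un n r) (u r) < ε) →
    ∀ᵐ t0 ∂(volume : Measure ℝ), t0 ∈ Set.Icc s t →
      Conv (fun a b => ‖a - b‖) (fun n => un n t0) (u t0)

/-!
The weak convergence `u_n(t*) ⇀ u(t*)` is given, so by the Radon–Riesz property it suffices
to show `‖u_n(t*)‖ → ‖u(t*)‖`. Weak lower semicontinuity of the norm gives the lower bound.
For the upper bound, pick a time `r < t*` close to `t*` at which A3 gives strong convergence
`u_n(r) → u(r)` and at which the energy inequality A2 holds for every `u_n`; then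
`‖u_n(t*)‖ ≤ ‖u_n(r)‖ + ε → ‖u(r)‖ + ε`, and `‖u(r)‖` is close to `‖u(t*)‖` by continuity.
-/

lemma conv_norm_sub_iff_tendsto {H : Type*} [SeminormedAddCommGroup H] {v : ℕ → H} {x : H} :
    Conv (fun a b => ‖a - b‖) v x ↔ Tendsto v atTop (𝓝 x) := by
  simp only [Conv, Metric.tendsto_atTop, dist_eq_norm, ge_iff_le]

lemma conv_apply_of_uniformOn {d : X → X → ℝ} {S : Set ℝ} {v : ℕ → ℝ → X} {w : ℝ → X}
    (h : ∀ ε > (0 : ℝ), ∃ N, ∀ n ≥ N, ∀ r ∈ S, d (v n r) (w r) < ε) {r : ℝ} (hr : r ∈ S) :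
    Conv d (fun n => v n r) (w r) :=
  fun ε hε => (h ε hε).imp fun _ hN n hn => hN n hn r hr

lemma eventually_norm_lt_of_A2_of_A3 {H : Type*} [NormedAddCommGroup H] {E : GES H}
    {dw : H → H → ℝ} (hA2 : A2 E) (hA3 : A3 E dw) {s t : ℝ} (hst : s < t) {u : ℝ → H}
    (hu : u ∈ E.traj s) {un : ℕ → ℝ → H} (hun : ∀ n, un n ∈ E.traj s)
    (hconv : ∀ ε > (0 : ℝ), ∃ N, ∀ n ≥ N, ∀ r ∈ Set.Icc s t, dw (un n r) (u r) < ε)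
    (hcont : ContinuousWithinAt u (Set.Iio t) t) {c : ℝ} (hc : ‖u t‖ < c) :
    ∀ᶠ n in atTop, ‖un n t‖ < c := by
  set ε := (c - ‖u t‖) / 3 with hε_def
  have hε : 0 < ε := by linarith
  obtain ⟨δ, hδ, henergy⟩ := hA2 ε hε s
  have henergy_all : ∀ᵐ r, ∀ n, r ∈ Set.Ioo (t - δ) t → ‖un n t‖ ≤ ‖un n r‖ + ε :=
    ae_all_iff.2 fun n => henergy (un n) (hun n) t hst
  have hstrong := hA3 s t hst.le u hu un hun hconv
  obtain ⟨l, hl, hnear⟩ := mem_nhdsLT_iff_exists_Ioo_subset.1 <|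
    hcont.norm.eventually (gt_mem_nhds (show ‖u t‖ < ‖u t‖ + ε by linarith))
  set a := max (max l (t - δ)) s
  have ha : a < t := max_lt (max_lt hl (sub_lt_self t hδ)) hst
  have hvol : volume (Set.Ioo a t) ≠ 0 := by simp [ha]
  obtain ⟨r, hr, hr_strong, hr_energy⟩ :=
    Measure.exists_mem_of_measure_ne_zero_of_ae hvol (ae_restrict_of_ae (hstrong.and henergy_all))
  have hr_mem : r ∈ Set.Icc s t := ⟨(le_max_right _ _).trans hr.1.le, hr.2.le⟩
  have hr_near : ‖u r‖ < ‖u t‖ + ε :=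
    hnear ⟨(le_max_left _ _ |>.trans (le_max_left _ _)).trans_lt hr.1, hr.2⟩
  have hr_delta : r ∈ Set.Ioo (t - δ) t :=
    ⟨(le_max_right _ _ |>.trans (le_max_left _ _)).trans_lt hr.1, hr.2⟩
  filter_upwards [(conv_norm_sub_iff_tendsto.1 (hr_strong hr_mem)).norm.eventually
    (gt_mem_nhds (show ‖u r‖ < ‖u r‖ + ε by linarith))] with n hn
  calc ‖un n t‖ ≤ ‖un n r‖ + ε := hr_energy n hr_delta
    _ < ‖u t‖ + 3 * ε := by linarith
    _ = c := by rw [hε_def]; ring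

theorem stmt16_general {H : Type*} [NormedAddCommGroup H] (E : GES H) (dw : H → H → ℝ)
    (hRR : ∀ (u : ℕ → H) (x : H), Conv dw u x →
      Tendsto (fun n => ‖u n‖) atTop (nhds ‖x‖) → Conv (fun a b => ‖a - b‖) u x)
    (hlsc : ∀ (u : ℕ → H) (x : H), Conv dw u x →
      ‖x‖ ≤ Filter.liminf (fun n => ‖u n‖) atTop)
    (hA2 : A2 E) (hA3 : A3 E dw)
    (s t : ℝ) (u : ℝ → H) (hu : u ∈ E.traj s)
    (un : ℕ → ℝ → H) (hun : ∀ n, un n ∈ E.traj s)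
    (hconv : ∀ ε > (0 : ℝ), ∃ N, ∀ n ≥ N, ∀ r ∈ Set.Icc s t, dw (un n r) (u r) < ε)
    (tstar : ℝ) (htstar : tstar ∈ Set.Ioo s t)
    (hcont : ∀ ε > (0 : ℝ), ∃ δ > (0 : ℝ), ∀ r : ℝ, |r - tstar| < δ →
      ‖u r - u tstar‖ < ε) :
    Conv (fun a b => ‖a - b‖) (fun n => un n tstar) (u tstar) := by
  have hweak : Conv dw (fun n => un n tstar) (u tstar) :=
    conv_apply_of_uniformOn hconv (Set.Ioo_subset_Icc_self htstar)
  have hconv' : ∀ ε > (0 : ℝ), ∃ N, ∀ n ≥ N, ∀ r ∈ Set.Icc s tstar, dw (un n r) (u r) < ε :=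
    fun ε hε => (hconv ε hε).imp fun _ hN n hn r hr => hN n hn r ⟨hr.1, hr.2.trans htstar.2.le⟩
  have hleft : ContinuousWithinAt u (Set.Iio tstar) tstar :=
    (Metric.continuousAt_iff.2 fun ε hε => by
      simpa only [dist_eq_norm, Real.norm_eq_abs] using hcont ε hε).continuousWithinAt
  have hnorm : Tendsto (fun n => ‖un n tstar‖) atTop (𝓝 ‖u tstar‖) := tendsto_order.2
    ⟨fun c hc => eventually_lt_of_lt_liminf (hc.trans_le (hlsc _ _ hweak))
        (isBoundedUnder_of_eventually_ge (.of_forall fun _ => norm_nonneg _)),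
     fun c hc => eventually_norm_lt_of_A2_of_A3 hA2 hA3 htstar.1 hu hun hconv' hleft hc⟩
  exact hRR _ _ hweak hnorm

/-- under A2 and A3 (with `d_s` the norm metric on a space with
the Radon–Riesz property and `d_w` inducing the weak topology, so the norm is
weakly sequentially lower semicontinuous), if `u_n → u` in `C([s,t];X_w)` and
`u` is strongly continuous at `t* ∈ (s,t)`, then `u_n(t*) → u(t*)` strongly. -/
theorem stmt16 {H : Type*} [NormedAddCommGroup H] (E : GES H) (dw : H → H → ℝ)
    (hdw : IsMetric dw)
    (hRR : ∀ (u : ℕ → H) (x : H), Conv dw u x →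
      Tendsto (fun n => ‖u n‖) atTop (nhds ‖x‖) → Conv (fun a b => ‖a - b‖) u x)
    (hlsc : ∀ (u : ℕ → H) (x : H), Conv dw u x →
      ‖x‖ ≤ Filter.liminf (fun n => ‖u n‖) atTop)
    (hA2 : A2 E) (hA3 : A3 E dw)
    (s t : ℝ) (hst : s ≤ t) (u : ℝ → H) (hu : u ∈ E.traj s)
    (un : ℕ → ℝ → H) (hun : ∀ n, un n ∈ E.traj s)
    (hconv : ∀ ε > (0 : ℝ), ∃ N, ∀ n ≥ N, ∀ r ∈ Set.Icc s t, dw (un n r) (u r) < ε)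
    (tstar : ℝ) (htstar : tstar ∈ Set.Ioo s t)
    (hcont : ∀ ε > (0 : ℝ), ∃ δ > (0 : ℝ), ∀ r : ℝ, |r - tstar| < δ →
      ‖u r - u tstar‖ < ε) :
    Conv (fun a b => ‖a - b‖) (fun n => un n tstar) (u tstar) :=
  stmt16_general E dw hRR hlsc hA2 hA3 s t u hu un hun hconv tstar htstar hcont
end
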